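/- Let (X, T, Y) satisfy Y = T·Y_1 + (1−T)·Y_0 with (Y_0, Y_1) ⊥ T | X. Then for any integrable potential outcomes, E[Y·T / e(X)] = E[Y_1] and E[Y·(1−T)/(1−e(X))] = E[Y_0], where e(X) = P(T=1|X), provided 0 < e(X) < 1 almost surely (inverse-propensity weighting identity). -/

import Mathlib

/-! Reweighting `P` by the density `1_A / P(A | X)` leaves the law of the potential outcomes
`Z = (Y₀, Y₁)` unchanged: on a fibre `{X = x}` of positive mass, conditional independence reads
`P(A ∩ {Z ∈ B} ∩ {X = x}) = P(A | X = x) · P({Z ∈ B} ∩ {X = x})`, and summing over the countably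
many fibres gives `P({Z ∈ B})`. The two IPW integrals are the integrals of `Y₁` and `Y₀` against
this reweighted measure, for `A = {T = 1}` and `A = {T = 0}`; the second propensity is `1 - e`. -/

open MeasureTheory

open scoped ENNReal

theorem ENNReal.div_mul_eq_of_mul_eq {a b c d : ℝ≥0∞} (h : c * a = b * d) (hd : d ≤ a)
    (hb : a ≠ 0 → b ≠ 0) (hb' : b ≠ ∞) : a / b * c = d := by
  rcases eq_or_ne a 0 with rfl | ha
  · simp [nonpos_iff_eq_zero.1 hd]
  · rw [div_eq_mul_inv, mul_right_comm, mul_comm a, h, mul_right_comm,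
      ENNReal.mul_inv_cancel (hb ha) hb', one_mul]

section InversePropensityWeighting

variable {Ω 𝒳 : Type*} [MeasurableSpace Ω] {μ : Measure Ω} {X : Ω → 𝒳} {A : Set Ω}

noncomputable def propensity (μ : Measure Ω) (X : Ω → 𝒳) (A : Set Ω) (x : 𝒳) : ℝ :=
  (μ (A ∩ X ⁻¹' {x})).toReal / (μ (X ⁻¹' {x})).toReal

/-- The density `1_A / propensity μ X A X`; it vanishes on `μ`-null fibres, where `0 / 0 = 0`. -/
noncomputable def ipwWeight (μ : Measure Ω) (X : Ω → 𝒳) (A : Set Ω) : Ω → ℝ≥0∞ :=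
  A.indicator fun ω => μ (X ⁻¹' {X ω}) / μ (A ∩ X ⁻¹' {X ω})

theorem toReal_ipwWeight (ω : Ω) :
    (ipwWeight μ X A ω).toReal = A.indicator (fun ω => (propensity μ X A (X ω))⁻¹) ω := by
  by_cases hω : ω ∈ A <;> simp [ipwWeight, propensity, hω, ENNReal.toReal_div]

theorem ipwWeight_ne_top [IsFiniteMeasure μ]
    (hpos : ∀ x, 0 < μ (X ⁻¹' {x}) → 0 < μ (A ∩ X ⁻¹' {x})) (ω : Ω) :
    ipwWeight μ X A ω ≠ ∞ := by
  by_cases hω : ω ∈ A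
  · rw [ipwWeight, Set.indicator_of_mem hω]
    rcases (zero_le : 0 ≤ μ (X ⁻¹' {X ω})).eq_or_lt with hnull | hfiber
    · simp [← hnull]
    · exact ENNReal.div_ne_top (measure_ne_top _ _) (hpos _ hfiber).ne'
  · simp [ipwWeight, hω]

theorem measure_inter_add_compl_inter (hA : MeasurableSet A) (s : Set Ω) :
    μ (A ∩ s) + μ (Aᶜ ∩ s) = μ s := by
  rw [Set.inter_comm A, ← Set.sdiff_eq_compl_inter, measure_inter_add_sdiff s hA]

theorem measure_compl_inter_pos (hA : MeasurableSet A) {s : Set Ω} (hs : μ (A ∩ s) < μ s) :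
    0 < μ (Aᶜ ∩ s) := by
  refine pos_iff_ne_zero.2 fun h => hs.ne ?_
  rw [← measure_inter_add_compl_inter hA s, h, add_zero]

theorem one_sub_propensity [IsFiniteMeasure μ] (hA : MeasurableSet A) {x : 𝒳}
    (hx : μ (X ⁻¹' {x}) ≠ 0) : 1 - propensity μ X A x = propensity μ X Aᶜ x := by
  have hsplit := congrArg ENNReal.toReal (measure_inter_add_compl_inter (μ := μ) hA (X ⁻¹' {x}))
  rw [ENNReal.toReal_add (measure_ne_top _ _) (measure_ne_top _ _)] at hsplit
  have hx' : (μ (X ⁻¹' {x})).toReal ≠ 0 := ENNReal.toReal_ne_zero.2 ⟨hx, measure_ne_top _ _⟩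
  rw [propensity, propensity, eq_div_iff hx', sub_mul, div_mul_cancel₀ _ hx']
  linarith

theorem ae_measure_fiber_ne_zero [Countable 𝒳] (μ : Measure Ω) (X : Ω → 𝒳) :
    ∀ᵐ ω ∂μ, μ (X ⁻¹' {X ω}) ≠ 0 := by
  rw [ae_iff]
  simp only [not_not]
  exact (measure_preimage_eq_zero_iff_of_countable (Set.to_countable _)).2 fun _ hx => hx

variable [MeasurableSpace 𝒳] [Countable 𝒳] [MeasurableSingletonClass 𝒳]

theorem measurable_ipwWeight (hX : Measurable X) (hA : MeasurableSet A) :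
    Measurable (ipwWeight μ X A) :=
  ((measurable_of_countable fun x => μ (X ⁻¹' {x}) / μ (A ∩ X ⁻¹' {x})).comp hX).indicator hA

theorem lintegral_indicator_comp_eq_tsum (ν : Measure Ω) (hX : Measurable X)
    (hA : MeasurableSet A) (g : 𝒳 → ℝ≥0∞) :
    ∫⁻ ω, A.indicator (fun ω => g (X ω)) ω ∂ν = ∑' x, g x * ν (A ∩ X ⁻¹' {x}) := by
  have hfiber (x : 𝒳) : MeasurableSet (X ⁻¹' {x}) := hX (measurableSet_singleton x)
  have hcover : (⋃ x, X ⁻¹' {x}) = Set.univ := by ext; simp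
  rw [← setLIntegral_univ, ← hcover, lintegral_iUnion hfiber (pairwise_disjoint_fiber X)]
  refine tsum_congr fun x => ?_
  calc ∫⁻ ω in X ⁻¹' {x}, A.indicator (fun ω => g (X ω)) ω ∂ν
      = ∫⁻ ω in X ⁻¹' {x}, A.indicator (fun _ => g x) ω ∂ν :=
        setLIntegral_congr_fun (hfiber x) fun ω (hω : X ω = x) => by simp only [Set.indicator, hω]
    _ = g x * ν (A ∩ X ⁻¹' {x}) := by
        rw [lintegral_indicator_const hA, Measure.restrict_apply hA]

variable [IsFiniteMeasure μ] {β : Type*} [MeasurableSpace β] {Z : Ω → β}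

theorem map_withDensity_ipwWeight (hX : Measurable X) (hA : MeasurableSet A)
    (hZ : AEMeasurable Z μ)
    (hindep : ∀ B, MeasurableSet B → ∀ x, μ (A ∩ Z ⁻¹' B ∩ X ⁻¹' {x}) * μ (X ⁻¹' {x})
      = μ (A ∩ X ⁻¹' {x}) * μ (Z ⁻¹' B ∩ X ⁻¹' {x}))
    (hpos : ∀ x, 0 < μ (X ⁻¹' {x}) → 0 < μ (A ∩ X ⁻¹' {x})) :
    (μ.withDensity (ipwWeight μ X A)).map Z = μ.map Z := by
  ext B hB
  have hfiber (x : 𝒳) : MeasurableSet (X ⁻¹' {x}) := hX (measurableSet_singleton x)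
  have hcover : (⋃ x, X ⁻¹' {x}) = Set.univ := by ext; simp
  rw [Measure.map_apply_of_aemeasurable (hZ.mono_ac (withDensity_absolutelyContinuous _ _)) hB,
    Measure.map_apply_of_aemeasurable hZ hB, withDensity_apply', ipwWeight,
    lintegral_indicator_comp_eq_tsum _ hX hA fun x => μ (X ⁻¹' {x}) / μ (A ∩ X ⁻¹' {x}),
    ← Measure.restrict_apply_univ, ← hcover, measure_iUnion (pairwise_disjoint_fiber X) hfiber]
  refine tsum_congr fun x => ?_
  rw [Measure.restrict_apply (hA.inter (hfiber x)), Measure.restrict_apply (hfiber x),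
    Set.inter_right_comm, Set.inter_comm (X ⁻¹' {x})]
  exact ENNReal.div_mul_eq_of_mul_eq (hindep B hB x) (measure_mono Set.inter_subset_right)
    (fun h => (hpos x (pos_iff_ne_zero.2 h)).ne') (measure_ne_top _ _)

theorem integral_ipwWeight_smul {E : Type*} [NormedAddCommGroup E] [NormedSpace ℝ E]
    (hX : Measurable X) (hA : MeasurableSet A) (hZ : AEMeasurable Z μ)
    (hindep : ∀ B, MeasurableSet B → ∀ x, μ (A ∩ Z ⁻¹' B ∩ X ⁻¹' {x}) * μ (X ⁻¹' {x})
      = μ (A ∩ X ⁻¹' {x}) * μ (Z ⁻¹' B ∩ X ⁻¹' {x}))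
    (hpos : ∀ x, 0 < μ (X ⁻¹' {x}) → 0 < μ (A ∩ X ⁻¹' {x}))
    {f : β → E} (hf : AEStronglyMeasurable f (μ.map Z)) :
    ∫ ω, (ipwWeight μ X A ω).toReal • f (Z ω) ∂μ = ∫ ω, f (Z ω) ∂μ := by
  have hlaw := map_withDensity_ipwWeight hX hA hZ hindep hpos
  rw [← integral_withDensity_eq_integral_toReal_smul (measurable_ipwWeight hX hA)
      (ae_of_all _ fun ω => (ipwWeight_ne_top hpos ω).lt_top),
    ← integral_map (hZ.mono_ac (withDensity_absolutelyContinuous _ _)) (hlaw ▸ hf), hlaw,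
    integral_map hZ hf]

end InversePropensityWeighting

theorem ipw_identity_general {Ω 𝒳 : Type*} [MeasurableSpace Ω]
    [MeasurableSpace 𝒳] [Countable 𝒳] [MeasurableSingletonClass 𝒳]
    (P : Measure Ω) [IsProbabilityMeasure P]
    (X : Ω → 𝒳) (hX : Measurable X) (T : Ω → Bool) (hT : Measurable T)
    (Y0 Y1 Y : Ω → ℝ)
    (hY : ∀ ω, Y ω = if T ω then Y1 ω else Y0 ω)
    (hY0 : Integrable Y0 P) (hY1 : Integrable Y1 P)
    (hindep : ∀ (t : Bool) (B : Set (ℝ × ℝ)), MeasurableSet B → ∀ x : 𝒳,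
      P ({ω | T ω = t} ∩ {ω | (Y0 ω, Y1 ω) ∈ B} ∩ {ω | X ω = x}) * P {ω | X ω = x}
        = P ({ω | T ω = t} ∩ {ω | X ω = x}) * P ({ω | (Y0 ω, Y1 ω) ∈ B} ∩ {ω | X ω = x}))
    (e : 𝒳 → ℝ)
    (he : ∀ x, e x = (P ({ω | T ω = true} ∩ {ω | X ω = x})).toReal
        / (P {ω | X ω = x}).toReal)
    (hpos : ∀ x : 𝒳, 0 < P {ω | X ω = x} →
      0 < P ({ω | T ω = true} ∩ {ω | X ω = x}) ∧
      P ({ω | T ω = true} ∩ {ω | X ω = x}) < P {ω | X ω = x}) :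
    (∫ ω, Y ω * (if T ω then 1 else 0) / e (X ω) ∂P) = ∫ ω, Y1 ω ∂P ∧
    (∫ ω, Y ω * (if T ω then 0 else 1) / (1 - e (X ω)) ∂P) = ∫ ω, Y0 ω ∂P := by
  have hZ : AEMeasurable (fun ω => (Y0 ω, Y1 ω)) P := hY0.aemeasurable.prodMk hY1.aemeasurable
  have hA (t : Bool) : MeasurableSet {ω | T ω = t} := hT (measurableSet_singleton t)
  have hcompl : {ω | T ω = true}ᶜ = {ω | T ω = false} := by ext; simp
  have he' : e = propensity P X {ω | T ω = true} := funext he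
  have treated := integral_ipwWeight_smul hX (hA true) hZ (hindep true)
    (fun x hx => (hpos x hx).1) measurable_snd.aestronglyMeasurable
  have control := integral_ipwWeight_smul hX (hA false) hZ (hindep false)
    (fun x hx => hcompl ▸ measure_compl_inter_pos (hA true) (hpos x hx).2)
    measurable_fst.aestronglyMeasurable
  constructor
  · rw [← treated]
    congr 1 with ω
    cases hT : T ω <;> simp [toReal_ipwWeight, hY, hT, he', div_eq_inv_mul]
  · rw [← control]
    refine integral_congr_ae ?_
    filter_upwards [ae_measure_fiber_ne_zero P X] with ω hω
    cases hT : T ω <;>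
      simp [toReal_ipwWeight, hY, hT, he', div_eq_inv_mul, one_sub_propensity (hA true) hω, hcompl]

/-- Inverse-propensity weighting identity: under unconfoundedness given a
countable covariate and positivity `0 < e(x) < 1` wherever `P(X=x) > 0`,
`E[Y·T / e(X)] = E[Y₁]` and `E[Y·(1-T)/(1-e(X))] = E[Y₀]`. -/
theorem ipw_identity {Ω 𝒳 : Type*} [MeasurableSpace Ω]
    [MeasurableSpace 𝒳] [Countable 𝒳] [MeasurableSingletonClass 𝒳]
    (P : Measure Ω) [IsProbabilityMeasure P]
    (X : Ω → 𝒳) (hX : Measurable X) (T : Ω → Bool) (hT : Measurable T)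
    (Y0 Y1 Y : Ω → ℝ)
    (hY : ∀ ω, Y ω = if T ω then Y1 ω else Y0 ω)
    (hY0 : Integrable Y0 P) (hY1 : Integrable Y1 P)
    (hindep : ∀ (t : Bool) (B : Set (ℝ × ℝ)), MeasurableSet B → ∀ x : 𝒳,
      P ({ω | T ω = t} ∩ {ω | (Y0 ω, Y1 ω) ∈ B} ∩ {ω | X ω = x}) * P {ω | X ω = x}
        = P ({ω | T ω = t} ∩ {ω | X ω = x}) * P ({ω | (Y0 ω, Y1 ω) ∈ B} ∩ {ω | X ω = x}))
    (e : 𝒳 → ℝ)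
    (he : ∀ x, e x = (P ({ω | T ω = true} ∩ {ω | X ω = x})).toReal
        / (P {ω | X ω = x}).toReal)
    (hpos : ∀ x : 𝒳, 0 < P {ω | X ω = x} →
      0 < P ({ω | T ω = true} ∩ {ω | X ω = x}) ∧
      P ({ω | T ω = true} ∩ {ω | X ω = x}) < P {ω | X ω = x})
    (hw1 : Integrable (fun ω => Y ω * (if T ω then 1 else 0) / e (X ω)) P)
    (hw0 : Integrable (fun ω => Y ω * (if T ω then 0 else 1) / (1 - e (X ω))) P) :
    (∫ ω, Y ω * (if T ω then 1 else 0) / e (X ω) ∂P) = ∫ ω, Y1 ω ∂P ∧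
    (∫ ω, Y ω * (if T ω then 0 else 1) / (1 - e (X ω)) ∂P) = ∫ ω, Y0 ω ∂P :=
  ipw_identity_general P X hX T hT Y0 Y1 Y hY hY0 hY1 hindep e he hpos
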